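/- Let d ≥ 1, λ > 2, and let (aₙ) ⊂ S^d be a greedy λ-energy sequence. Then for each n ≥ 1, H_λ(α_{2n}) = 2^{λ+1} n² and H_λ(α_{2n+1}) = 2^{λ+1}(n² + n), where H_λ(α_N) = Σ_{0 ≤ i ≠ j ≤ N−1} |a_i − a_j|^λ. Consequently, H_λ(α_N)/N² → 2^{λ−1} as N → ∞. -/

import Mathlib

open Finset Filter

/-!
For unit vectors `x, y` the quantities `‖x - y‖²` and `‖x + y‖²` add up to `4`, so for `λ ≥ 2`
superadditivity of `t ↦ t ^ (λ / 2)` gives `‖x - y‖ ^ λ + ‖x + y‖ ^ λ ≤ 2 ^ λ`, with equality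
for `λ > 2` only when `x = ± y`. By induction, once the first `2k` points form `k` antipodal
pairs `{a₀, -a₀}`, their potential at `x` is `k (‖x - a₀‖ ^ λ + ‖x + a₀‖ ^ λ)`: its maxima are
`± a₀`, so `a₂ₖ = ± a₀`. Adding `a₂ₖ` contributes `‖x - a₂ₖ‖ ^ λ ≤ 2 ^ λ`; both bounds are attained
at `x = -a₂ₖ`, so the maximizer `a₂ₖ₊₁` satisfies `‖a₂ₖ₊₁ - a₂ₖ‖ = 2`, i.e. `a₂ₖ₊₁ = -a₂ₖ`.
Hence every new point is at distance `2` from exactly the earlier points of the opposite sign,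
and the energy grows by `2 ^ (λ + 1)` times their number.
-/

namespace Real

theorem add_rpow_lt_rpow_add {p a b : ℝ} (ha : 0 < a) (hb : 0 < b) (hp : 1 < p) :
    a ^ p + b ^ p < (a + b) ^ p := by
  have hs : 0 < a + b := add_pos ha hb
  have h := add_lt_add
    (rpow_lt_self_of_lt_one (div_pos ha hs) ((div_lt_one hs).2 (by linarith)) hp)
    (rpow_lt_self_of_lt_one (div_pos hb hs) ((div_lt_one hs).2 (by linarith)) hp)
  rwa [← add_div, div_self hs.ne', div_rpow ha.le hs.le, div_rpow hb.le hs.le, ← add_div,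
    div_lt_one (rpow_pos_of_pos hs p)] at h

end Real

section UnitVectors

section Normed

variable {E : Type*} [SeminormedAddCommGroup E] [NormedSpace ℝ E] {x y : E} {ℓ : ℝ}

theorem norm_neg_sub_self (hx : ‖x‖ = 1) : ‖-x - x‖ = 2 := by
  rw [← neg_add', norm_neg, ← two_smul ℝ, norm_smul, hx]
  norm_num

theorem norm_sub_rpow_add_norm_add_rpow_of_eq_or_eq_neg (hy : ‖y‖ = 1) (hℓ : ℓ ≠ 0)
    (h : x = y ∨ x = -y) : ‖x - y‖ ^ ℓ + ‖x + y‖ ^ ℓ = 2 ^ ℓ := by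
  rcases h with rfl | rfl
  · rw [sub_self, norm_zero, Real.zero_rpow hℓ, ← neg_neg (x + x), norm_neg, neg_add',
      norm_neg_sub_self hy, zero_add]
  · rw [neg_add_cancel, norm_zero, Real.zero_rpow hℓ, norm_neg_sub_self hy, add_zero]

end Normed

variable {E : Type*} [NormedAddCommGroup E] [InnerProductSpace ℝ E] {x y : E} {ℓ : ℝ}

theorem norm_sub_sq_add_norm_add_sq_of_norm_eq_one (hx : ‖x‖ = 1) (hy : ‖y‖ = 1) :
    ‖x - y‖ ^ 2 + ‖x + y‖ ^ 2 = 4 := by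
  have h := parallelogram_law_with_norm ℝ x y
  rw [hx, hy] at h
  linarith

private theorem rpow_eq_sq_rpow_half {t : ℝ} (ht : 0 ≤ t) (s : ℝ) :
    t ^ s = (t ^ 2) ^ (s / 2) := by
  rw [← Real.rpow_natCast_mul ht]
  congr 1
  push_cast
  ring

theorem norm_sub_rpow_add_norm_add_rpow_le (hx : ‖x‖ = 1) (hy : ‖y‖ = 1) (hℓ : 2 ≤ ℓ) :
    ‖x - y‖ ^ ℓ + ‖x + y‖ ^ ℓ ≤ 2 ^ ℓ := by
  rw [rpow_eq_sq_rpow_half (norm_nonneg _), rpow_eq_sq_rpow_half (norm_nonneg _),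
    rpow_eq_sq_rpow_half zero_le_two, show (2 : ℝ) ^ 2 = 4 by norm_num,
    ← norm_sub_sq_add_norm_add_sq_of_norm_eq_one hx hy]
  exact Real.add_rpow_le_rpow_add (by positivity) (by positivity) (by linarith)

theorem eq_or_eq_neg_of_two_rpow_le (hx : ‖x‖ = 1) (hy : ‖y‖ = 1) (hℓ : 2 < ℓ)
    (h : 2 ^ ℓ ≤ ‖x - y‖ ^ ℓ + ‖x + y‖ ^ ℓ) : x = y ∨ x = -y := by
  by_contra! hne
  have hsub : 0 < ‖x - y‖ := norm_pos_iff.2 (sub_ne_zero.2 hne.1)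
  have hadd : 0 < ‖x + y‖ := norm_pos_iff.2 fun h0 => hne.2 (eq_neg_of_add_eq_zero_left h0)
  have hlt := Real.add_rpow_lt_rpow_add (pow_pos hsub 2) (pow_pos hadd 2)
    (show 1 < ℓ / 2 by linarith)
  rw [norm_sub_sq_add_norm_add_sq_of_norm_eq_one hx hy, ← rpow_eq_sq_rpow_half hsub.le,
    ← rpow_eq_sq_rpow_half hadd.le, show (4 : ℝ) = 2 ^ 2 by norm_num,
    ← rpow_eq_sq_rpow_half zero_le_two] at hlt
  linarith

theorem eq_neg_of_two_le_norm_sub (hx : ‖x‖ = 1) (hy : ‖y‖ = 1) (h : 2 ≤ ‖x - y‖) : x = -y := by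
  have h4 := norm_sub_sq_add_norm_add_sq_of_norm_eq_one hx hy
  have h0 : ‖x + y‖ ^ 2 = 0 := by nlinarith [sq_nonneg ‖x + y‖]
  exact eq_neg_of_add_eq_zero_left (norm_eq_zero.1 (pow_eq_zero_iff two_ne_zero |>.1 h0))

end UnitVectors

-- `AntipodalAt a j` says `{a (2 * j), a (2 * j + 1)} = {a 0, -a 0}`.
def AntipodalAt {E : Type*} [Neg E] (a : ℕ → E) (j : ℕ) : Prop :=
  (a (2 * j) = a 0 ∨ a (2 * j) = -a 0) ∧ a (2 * j + 1) = -a (2 * j)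

theorem sum_range_two_mul_of_antipodalAt {E M : Type*} [InvolutiveNeg E] [AddCommMonoid M]
    (f : E → M) {a : ℕ → E} {k : ℕ} (h : ∀ j < k, AntipodalAt a j) :
    ∑ i ∈ range (2 * k), f (a i) = k • (f (a 0) + f (-a 0)) := by
  induction k with
  | zero => simp
  | succ k ih =>
    obtain ⟨hsign, hnext⟩ := h k k.lt_succ_self
    have hpair : f (a (2 * k)) + f (a (2 * k + 1)) = f (a 0) + f (-a 0) := by
      rcases hsign with hk | hk <;> rw [hnext, hk]
      rw [neg_neg, add_comm]
    rw [Nat.mul_succ, sum_range_succ, sum_range_succ, add_assoc, hpair,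
      ih fun j hj => h j (hj.trans k.lt_succ_self), succ_nsmul]

theorem tendsto_div_sq_of_le_of_le {f : ℕ → ℝ} {c : ℝ}
    (hlow : ∀ N : ℕ, c * ((N : ℝ) ^ 2 - 1) ≤ f N) (hup : ∀ N, f N ≤ c * (N : ℝ) ^ 2) :
    Tendsto (fun N : ℕ => f N / (N : ℝ) ^ 2) atTop (nhds c) := by
  have hsq : Tendsto (fun N : ℕ => (N : ℝ) ^ 2) atTop atTop :=
    (tendsto_pow_atTop two_ne_zero).comp tendsto_natCast_atTop_atTop
  have hlim : Tendsto (fun N : ℕ => c - c / (N : ℝ) ^ 2) atTop (nhds c) := by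
    simpa using tendsto_const_nhds.sub (tendsto_const_nhds.div_atTop hsq)
  refine tendsto_of_tendsto_of_tendsto_of_le_of_le' hlim tendsto_const_nhds ?_ ?_ <;>
    filter_upwards [hsq.eventually_gt_atTop 0] with N hN
  · rw [le_div_iff₀ hN, sub_mul, div_mul_cancel₀ _ hN.ne']
    linarith [hlow N]
  · exact (div_le_iff₀ hN).2 (hup N)

section Energy

variable {E : Type*} [SeminormedAddCommGroup E]

noncomputable def rieszPotential (ℓ : ℝ) (a : ℕ → E) (n : ℕ) (x : E) : ℝ :=
  ∑ k ∈ range n, ‖x - a k‖ ^ ℓ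

noncomputable def rieszEnergy (ℓ : ℝ) (a : ℕ → E) (N : ℕ) : ℝ :=
  ∑ p ∈ (range N ×ˢ range N).filter (fun p => p.1 ≠ p.2), ‖a p.1 - a p.2‖ ^ ℓ

structure IsGreedyEnergySeq (ℓ : ℝ) (a : ℕ → E) : Prop where
  mem_sphere : ∀ n, a n ∈ Metric.sphere (0 : E) 1
  isMaxOn : ∀ n, 1 ≤ n → IsMaxOn (rieszPotential ℓ a n) (Metric.sphere 0 1) (a n)

variable {ℓ : ℝ} {a : ℕ → E}

theorem rieszPotential_succ (n : ℕ) (x : E) :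
    rieszPotential ℓ a (n + 1) x = rieszPotential ℓ a n x + ‖x - a n‖ ^ ℓ :=
  sum_range_succ _ _

theorem rieszPotential_two_mul_of_antipodalAt {k : ℕ} (h : ∀ j < k, AntipodalAt a j) (x : E) :
    rieszPotential ℓ a (2 * k) x = k * (‖x - a 0‖ ^ ℓ + ‖x + a 0‖ ^ ℓ) := by
  rw [rieszPotential, sum_range_two_mul_of_antipodalAt (fun y => ‖x - y‖ ^ ℓ) h, nsmul_eq_mul,
    sub_neg_eq_add]

theorem rieszEnergy_eq_sum_sum (hℓ : ℓ ≠ 0) (N : ℕ) :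
    rieszEnergy ℓ a N = ∑ i ∈ range N, ∑ j ∈ range N, ‖a i - a j‖ ^ ℓ := by
  rw [rieszEnergy, sum_filter_of_ne, sum_product]
  intro p _ hp
  contrapose! hp
  rw [hp, sub_self, norm_zero, Real.zero_rpow hℓ]

theorem rieszEnergy_succ (hℓ : ℓ ≠ 0) (N : ℕ) :
    rieszEnergy ℓ a (N + 1) = rieszEnergy ℓ a N + 2 * rieszPotential ℓ a N (a N) := by
  simp only [rieszEnergy_eq_sum_sum hℓ, rieszPotential, sum_range_succ, sum_add_distrib,
    sub_self, norm_zero, Real.zero_rpow hℓ, add_zero]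
  simp only [norm_sub_rev (a _) (a N)]
  ring

theorem IsGreedyEnergySeq.norm_eq_one (h : IsGreedyEnergySeq ℓ a) (n : ℕ) : ‖a n‖ = 1 :=
  mem_sphere_zero_iff_norm.1 (h.mem_sphere n)

theorem IsGreedyEnergySeq.neg_mem_sphere (h : IsGreedyEnergySeq ℓ a) (n : ℕ) :
    -a n ∈ Metric.sphere (0 : E) 1 := by
  rw [mem_sphere_zero_iff_norm, norm_neg, h.norm_eq_one]

end Energy

namespace IsGreedyEnergySeq

variable {E : Type*} [NormedAddCommGroup E] [InnerProductSpace ℝ E] {ℓ : ℝ} {a : ℕ → E}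

theorem eq_or_eq_neg_of_antipodalAt (h : IsGreedyEnergySeq ℓ a) (hℓ : 2 < ℓ) {k : ℕ}
    (hk : ∀ j < k, AntipodalAt a j) : a (2 * k) = a 0 ∨ a (2 * k) = -a 0 := by
  rcases Nat.eq_zero_or_pos k with rfl | hpos
  · exact Or.inl rfl
  have hmax := isMaxOn_iff.1 (h.isMaxOn (2 * k) (by omega)) _ (h.neg_mem_sphere 0)
  rw [rieszPotential_two_mul_of_antipodalAt hk, rieszPotential_two_mul_of_antipodalAt hk,
    norm_sub_rpow_add_norm_add_rpow_of_eq_or_eq_neg (h.norm_eq_one 0) (by linarith)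
      (Or.inr rfl)] at hmax
  exact eq_or_eq_neg_of_two_rpow_le (h.norm_eq_one _) (h.norm_eq_one 0) hℓ
    (le_of_mul_le_mul_left hmax (by exact_mod_cast hpos))

theorem eq_neg_of_antipodalAt (h : IsGreedyEnergySeq ℓ a) (hℓ : 2 < ℓ) {k : ℕ}
    (hk : ∀ j < k, AntipodalAt a j) : a (2 * k + 1) = -a (2 * k) := by
  have hsign := h.eq_or_eq_neg_of_antipodalAt hℓ hk
  have hmax := isMaxOn_iff.1 (h.isMaxOn (2 * k + 1) (by omega)) _ (h.neg_mem_sphere (2 * k))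
  rw [rieszPotential_succ, rieszPotential_succ, rieszPotential_two_mul_of_antipodalAt hk,
    rieszPotential_two_mul_of_antipodalAt hk] at hmax
  have hpole : ‖-a (2 * k) - a 0‖ ^ ℓ + ‖-a (2 * k) + a 0‖ ^ ℓ = 2 ^ ℓ :=
    norm_sub_rpow_add_norm_add_rpow_of_eq_or_eq_neg (h.norm_eq_one 0) (by linarith)
      (by rcases hsign with hs | hs <;> simp [hs])
  have hle := norm_sub_rpow_add_norm_add_rpow_le (h.norm_eq_one (2 * k + 1)) (h.norm_eq_one 0)
    (by linarith : 2 ≤ ℓ)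
  rw [hpole, norm_neg_sub_self (h.norm_eq_one _)] at hmax
  refine eq_neg_of_two_le_norm_sub (h.norm_eq_one _) (h.norm_eq_one _) ?_
  refine (Real.rpow_le_rpow_iff zero_le_two (norm_nonneg _) (by linarith : 0 < ℓ)).1 ?_
  nlinarith [mul_le_mul_of_nonneg_left hle k.cast_nonneg]

theorem antipodalAt (h : IsGreedyEnergySeq ℓ a) (hℓ : 2 < ℓ) (k : ℕ) : AntipodalAt a k := by
  induction k using Nat.strong_induction_on with
  | _ k ih => exact ⟨h.eq_or_eq_neg_of_antipodalAt hℓ ih, h.eq_neg_of_antipodalAt hℓ ih⟩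

theorem rieszPotential_two_mul_self (h : IsGreedyEnergySeq ℓ a) (hℓ : 2 < ℓ) (k : ℕ) :
    rieszPotential ℓ a (2 * k) (a (2 * k)) = k * 2 ^ ℓ := by
  rw [rieszPotential_two_mul_of_antipodalAt fun j _ => h.antipodalAt hℓ j,
    norm_sub_rpow_add_norm_add_rpow_of_eq_or_eq_neg (h.norm_eq_one 0) (by linarith)
      (h.antipodalAt hℓ k).1]

theorem rieszPotential_two_mul_add_one_self (h : IsGreedyEnergySeq ℓ a) (hℓ : 2 < ℓ) (k : ℕ) :
    rieszPotential ℓ a (2 * k + 1) (a (2 * k + 1)) = (k + 1) * 2 ^ ℓ := by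
  obtain ⟨hsign, hnext⟩ := h.antipodalAt hℓ k
  rw [rieszPotential_succ, rieszPotential_two_mul_of_antipodalAt fun j _ => h.antipodalAt hℓ j,
    norm_sub_rpow_add_norm_add_rpow_of_eq_or_eq_neg (h.norm_eq_one 0) (by linarith)
      (by rcases hsign with hs | hs <;> simp [hnext, hs]),
    hnext, norm_neg_sub_self (h.norm_eq_one _)]
  ring

theorem rieszEnergy_two_mul (h : IsGreedyEnergySeq ℓ a) (hℓ : 2 < ℓ) (n : ℕ) :
    rieszEnergy ℓ a (2 * n) = 2 ^ (ℓ + 1) * (n : ℝ) ^ 2 := by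
  have hℓ0 : ℓ ≠ 0 := by linarith
  induction n with
  | zero => simp [rieszEnergy]
  | succ n ih =>
    rw [Nat.mul_succ, rieszEnergy_succ hℓ0, rieszEnergy_succ hℓ0, ih,
      h.rieszPotential_two_mul_self hℓ, h.rieszPotential_two_mul_add_one_self hℓ,
      Real.rpow_add_one two_ne_zero]
    push_cast
    ring

theorem rieszEnergy_two_mul_add_one (h : IsGreedyEnergySeq ℓ a) (hℓ : 2 < ℓ) (n : ℕ) :
    rieszEnergy ℓ a (2 * n + 1) = 2 ^ (ℓ + 1) * ((n : ℝ) ^ 2 + n) := by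
  rw [rieszEnergy_succ (by linarith), h.rieszEnergy_two_mul hℓ,
    h.rieszPotential_two_mul_self hℓ, Real.rpow_add_one two_ne_zero]
  ring

theorem tendsto_rieszEnergy_div_sq (h : IsGreedyEnergySeq ℓ a) (hℓ : 2 < ℓ) :
    Tendsto (fun N : ℕ => rieszEnergy ℓ a N / (N : ℝ) ^ 2) atTop (nhds (2 ^ (ℓ - 1))) := by
  have h4 : (2 : ℝ) ^ (ℓ + 1) = 4 * 2 ^ (ℓ - 1) := by
    rw [show ℓ + 1 = ℓ - 1 + 2 by ring, Real.rpow_add two_pos, Real.rpow_two]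
    ring
  have hc : (0 : ℝ) ≤ 2 ^ (ℓ - 1) := by positivity
  apply tendsto_div_sq_of_le_of_le <;> intro N <;>
    obtain ⟨n, rfl | rfl⟩ := Nat.even_or_odd' N <;>
    simp only [h.rieszEnergy_two_mul hℓ, h.rieszEnergy_two_mul_add_one hℓ, h4] <;> push_cast <;>
    nlinarith

end IsGreedyEnergySeq

theorem stmt_11_general (d : ℕ) (lam : ℝ) (hlam : 2 < lam)
    (a : ℕ → EuclideanSpace ℝ (Fin (d + 1)))
    (hsphere : ∀ n, a n ∈ Metric.sphere (0 : EuclideanSpace ℝ (Fin (d + 1))) 1)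
    (hgreedy : ∀ n, 1 ≤ n → ∀ x ∈ Metric.sphere (0 : EuclideanSpace ℝ (Fin (d + 1))) 1,
        ∑ k ∈ Finset.range n, ‖x - a k‖ ^ lam ≤ ∑ k ∈ Finset.range n, ‖a n - a k‖ ^ lam) :
    (∀ n : ℕ, 1 ≤ n →
      (∑ p ∈ ((Finset.range (2 * n)) ×ˢ (Finset.range (2 * n))).filter
          (fun p => p.1 ≠ p.2), ‖a p.1 - a p.2‖ ^ lam)
        = 2 ^ (lam + 1) * (n : ℝ) ^ 2 ∧
      (∑ p ∈ ((Finset.range (2 * n + 1)) ×ˢ (Finset.range (2 * n + 1))).filter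
          (fun p => p.1 ≠ p.2), ‖a p.1 - a p.2‖ ^ lam)
        = 2 ^ (lam + 1) * ((n : ℝ) ^ 2 + n)) ∧
    Tendsto (fun N : ℕ =>
        (∑ p ∈ ((Finset.range N) ×ˢ (Finset.range N)).filter
          (fun p => p.1 ≠ p.2), ‖a p.1 - a p.2‖ ^ lam) / (N : ℝ) ^ 2)
      atTop (nhds (2 ^ (lam - 1))) := by
  have h : IsGreedyEnergySeq lam a := ⟨hsphere, fun n hn => isMaxOn_iff.2 (hgreedy n hn)⟩
  exact ⟨fun n _ => ⟨h.rieszEnergy_two_mul hlam n, h.rieszEnergy_two_mul_add_one hlam n⟩,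
    h.tendsto_rieszEnergy_div_sq hlam⟩

theorem stmt_11 (d : ℕ) (hd : 1 ≤ d) (lam : ℝ) (hlam : 2 < lam)
    (a : ℕ → EuclideanSpace ℝ (Fin (d + 1)))
    (hsphere : ∀ n, a n ∈ Metric.sphere (0 : EuclideanSpace ℝ (Fin (d + 1))) 1)
    (hgreedy : ∀ n, 1 ≤ n → ∀ x ∈ Metric.sphere (0 : EuclideanSpace ℝ (Fin (d + 1))) 1,
        ∑ k ∈ Finset.range n, ‖x - a k‖ ^ lam ≤ ∑ k ∈ Finset.range n, ‖a n - a k‖ ^ lam) :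
    (∀ n : ℕ, 1 ≤ n →
      (∑ p ∈ ((Finset.range (2 * n)) ×ˢ (Finset.range (2 * n))).filter
          (fun p => p.1 ≠ p.2), ‖a p.1 - a p.2‖ ^ lam)
        = 2 ^ (lam + 1) * (n : ℝ) ^ 2 ∧
      (∑ p ∈ ((Finset.range (2 * n + 1)) ×ˢ (Finset.range (2 * n + 1))).filter
          (fun p => p.1 ≠ p.2), ‖a p.1 - a p.2‖ ^ lam)
        = 2 ^ (lam + 1) * ((n : ℝ) ^ 2 + n)) ∧
    Tendsto (fun N : ℕ =>
        (∑ p ∈ ((Finset.range N) ×ˢ (Finset.range N)).filter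
          (fun p => p.1 ≠ p.2), ‖a p.1 - a p.2‖ ^ lam) / (N : ℝ) ^ 2)
      atTop (nhds (2 ^ (lam - 1))) :=
  stmt_11_general d lam hlam a hsphere hgreedy
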